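/- arXiv:math/0105031 — 3 statements merged into one kernel-verified Lean document; each statement's English description precedes it below -/
import Mathlib

section
/- The pole-order reduction step is valid: for every integer $s \ge 3$ and all polynomials $R_1, S_1 \in K[x]$, one has in $\Omega^1_{S/K}$ the identity $\big(R_1(x)Q(x) + S_1(x)Q'(x)\big)\, y^{-s}\, dx \;=\; R_1(x)\, y^{-(s-2)}\, dx \;+\; \frac{2}{s-2} S_1'(x)\, y^{-(s-2)}\, dx \;+\; d\!\left(\frac{-2\,S_1(x)}{(s-2)\,y^{s-2}}\right).$ -/
open Polynomial

/-- The coordinate ring `K[x,y,y⁻¹]/(y² - Q(x))` of the hyperelliptic curve `y² = Q(x)`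
with the locus `y = 0` removed, realized as a quotient of a polynomial ring in the
three variables `x`, `y`, `y⁻¹`. -/
noncomputable def HypRing (K : Type*) [CommRing K] (Q : Polynomial K) : Type _ :=
  MvPolynomial (Fin 3) K ⧸
    (Ideal.span {(MvPolynomial.X 1 : MvPolynomial (Fin 3) K) ^ 2 -
        Polynomial.aeval (MvPolynomial.X 0) Q,
      (MvPolynomial.X 1 : MvPolynomial (Fin 3) K) * MvPolynomial.X 2 - 1})

noncomputable instance (K : Type*) [CommRing K] (Q : Polynomial K) : CommRing (HypRing K Q) :=
  Ideal.Quotient.commRing _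

noncomputable instance (K : Type*) [CommRing K] (Q : Polynomial K) : Algebra K (HypRing K Q) :=
  Ideal.Quotient.algebra K

/-- The image of `x` in the coordinate ring. -/
noncomputable def HypRing.x (K : Type*) [CommRing K] (Q : Polynomial K) : HypRing K Q :=
  Ideal.Quotient.mk _ (MvPolynomial.X 0)

/-- The image of `y` in the coordinate ring. -/
noncomputable def HypRing.y (K : Type*) [CommRing K] (Q : Polynomial K) : HypRing K Q :=
  Ideal.Quotient.mk _ (MvPolynomial.X 1)

/-- The image of `y⁻¹` in the coordinate ring. -/
noncomputable def HypRing.yinv (K : Type*) [CommRing K] (Q : Polynomial K) : HypRing K Q :=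
  Ideal.Quotient.mk _ (MvPolynomial.X 2)

/-- The pole-order reduction step on the hyperelliptic curve `y² = Q(x)` (minus the locus
`y = 0`) over a field `K` of characteristic zero: for every integer `s ≥ 3` and all polynomials
`R₁, S₁ ∈ K[x]`,
`(R₁ Q + S₁ Q') y⁻ˢ dx = R₁ y^{-(s-2)} dx + (2/(s-2)) S₁' y^{-(s-2)} dx + d(-2 S₁/((s-2) y^{s-2}))`
holds in the module of Kähler differentials. -/
theorem kedlaya_pole_reduction_step
    (K : Type*) [Field K] [CharZero K]
    (g : ℕ) (hg : 1 ≤ g)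
    (Q : Polynomial K) (hQdeg : Q.degree = (2 * g + 1 : ℕ))
    (s : ℕ) (hs : 3 ≤ s)
    (R₁ S₁ : Polynomial K) :
    (Polynomial.aeval (HypRing.x K Q) (R₁ * Q + S₁ * derivative Q) * HypRing.yinv K Q ^ s) •
        (KaehlerDifferential.D K (HypRing K Q)) (HypRing.x K Q) =
      (Polynomial.aeval (HypRing.x K Q) R₁ * HypRing.yinv K Q ^ (s - 2)) •
        (KaehlerDifferential.D K (HypRing K Q)) (HypRing.x K Q) +
      (((2 : K) / ((s : K) - 2)) •
          (Polynomial.aeval (HypRing.x K Q) (derivative S₁) * HypRing.yinv K Q ^ (s - 2))) •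
        (KaehlerDifferential.D K (HypRing K Q)) (HypRing.x K Q) +
      (KaehlerDifferential.D K (HypRing K Q))
        (((-2 : K) / ((s : K) - 2)) •
          (Polynomial.aeval (HypRing.x K Q) S₁ * HypRing.yinv K Q ^ (s - 2))) := by
  obtain ⟨u, rfl⟩ : ∃ u, s = u + 3 := ⟨s - 3, by omega⟩
  have hsub : u + 3 - 2 = u + 1 := by omega
  rw [hsub]
  set R := HypRing K Q with hR
  set X := HypRing.x K Q with hX
  set Y := HypRing.y K Q with hY
  set Z := HypRing.yinv K Q with hZ
  set D := KaehlerDifferential.D K R with hD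
  set φ := algebraMap K R with hφ
  set a := Polynomial.aeval X R₁ with ha
  set b := Polynomial.aeval X S₁ with hb
  set b' := Polynomial.aeval X (derivative S₁) with hb'
  set q' := Polynomial.aeval X (derivative Q) with hq'
  set τ : K := ((u + 3 : ℕ) : K) - 2 with hτ
  have hτt : τ = ((u + 1 : ℕ) : K) := by rw [hτ]; push_cast; ring
  have hτ0 : τ ≠ 0 := by
    rw [hτt]
    exact_mod_cast (Nat.cast_ne_zero (R := K)).mpr (Nat.succ_ne_zero u)
  -- basic relations in R
  have hZY : Z * Y = 1 := by
    have h0 : (Ideal.Quotient.mk _ ((MvPolynomial.X 1 : MvPolynomial (Fin 3) K) *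
        MvPolynomial.X 2 - 1) : R) = 0 :=
      Ideal.Quotient.eq_zero_iff_mem.mpr (Ideal.subset_span (by simp))
    have h1 : Y * Z - 1 = 0 := by
      rw [hY, hZ, HypRing.y, HypRing.yinv]
      simp only [map_sub, map_mul, map_one] at h0
      exact h0
    have := sub_eq_zero.mp h1
    rw [mul_comm]; exact this
  have hy2 : Y ^ 2 = Polynomial.aeval X Q := by
    have h0 : (Ideal.Quotient.mk _ ((MvPolynomial.X 1 : MvPolynomial (Fin 3) K) ^ 2 -
        Polynomial.aeval (MvPolynomial.X 0) Q) : R) = 0 :=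
      Ideal.Quotient.eq_zero_iff_mem.mpr (Ideal.subset_span (by simp))
    have h1 : (Polynomial.aeval X Q : R) =
        Ideal.Quotient.mk _ (Polynomial.aeval (MvPolynomial.X 0) Q) := by
      rw [hX, HypRing.x, ← Ideal.Quotient.mkₐ_eq_mk K]
      exact Polynomial.aeval_algHom_apply (Ideal.Quotient.mkₐ K _) _ Q
    have h2 : Y ^ 2 - Polynomial.aeval X Q = 0 := by
      rw [hY, HypRing.y, h1]
      simp only [map_sub, map_pow] at h0
      exact h0
    exact sub_eq_zero.mp h2
  -- derivative of Y
  have hDY : D Y = (φ 2⁻¹ * Z * q') • D X := by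
    have h1 : D (Y ^ 2) = q' • D X := by
      rw [hy2, hq']; exact D.map_aeval Q X
    have h2 : (2 : ℕ) • Y ^ (2 - 1) • D Y = q' • D X := by
      rw [← Derivation.leibniz_pow]; exact h1
    have h3 : ((2 : R) * Y) • D Y = q' • D X := by
      rw [show ((2 : R) * Y) • D Y = (2 : R) • (Y • D Y) by rw [← smul_eq_mul, smul_assoc]]
      rw [show ((2 : R) • (Y • D Y)) = (2 : ℕ) • Y ^ (2-1) • D Y by
        rw [pow_one, two_smul, two_nsmul]]
      exact h2
    have h4 := congrArg (fun ω => (φ 2⁻¹ * Z) • ω) h3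
    simp only [smul_smul] at h4
    have h5 : φ 2⁻¹ * Z * ((2 : R) * Y) = 1 := by
      have : (2 : R) = φ 2 := (map_ofNat φ 2).symm
      rw [this]
      have : φ 2⁻¹ * φ 2 = 1 := by rw [← map_mul]; norm_num
      calc φ 2⁻¹ * Z * (φ 2 * Y) = (φ 2⁻¹ * φ 2) * (Z * Y) := by ring
        _ = 1 := by rw [this, hZY, mul_one]
    rw [h5, one_smul] at h4
    exact h4
  have hDZ : D Z = (-(φ 2⁻¹) * Z ^ 3 * q') • D X := by
    have h1 : D Z = -Z ^ 2 • D Y := D.leibniz_of_mul_eq_one hZY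
    rw [h1, hDY, smul_smul]
    congr 1
    ring
  -- key scalar facts
  have key1 : φ ((-2 : K) / τ) * ((u + 1 : ℕ) : R) * (-(φ 2⁻¹)) = 1 := by
    have hcast : ((u + 1 : ℕ) : R) = φ ((u + 1 : ℕ) : K) := by
      rw [hφ]; simp
    rw [hcast, ← map_neg, ← map_mul, ← map_mul]
    rw [show ((-2 : K) / τ * ((u+1 : ℕ) : K) * (-2⁻¹ : K)) = 1 by
      rw [← hτt]; field_simp]
    simp
  have key2 : φ ((2 : K) / τ) = -φ ((-2 : K) / τ) := by
    rw [← map_neg]; congr 1; ring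
  -- compute the differential of the exact term
  have hDb : D b = b' • D X := by rw [hb, hb']; exact D.map_aeval S₁ X
  have hDpow : D (Z ^ (u + 1)) = ((u + 1 : ℕ) : R) • ((Z ^ u * (-(φ 2⁻¹) * Z ^ 3 * q')) • D X) := by
    rw [Derivation.leibniz_pow, hDZ, Nat.add_sub_cancel, smul_smul]
    rw [← Nat.cast_smul_eq_nsmul R]
  have hD3 : D (((-2 : K) / τ) • (b * Z ^ (u + 1))) =
      (φ ((-2 : K) / τ) * (b * (((u + 1 : ℕ) : R) * (Z ^ u * (-(φ 2⁻¹) * Z ^ 3 * q'))) +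
        Z ^ (u + 1) * b')) • D X := by
    rw [D.map_smul, Derivation.leibniz, hDpow, hDb]
    rw [smul_smul, smul_smul, smul_smul, ← add_smul]
    rw [← algebraMap_smul R ((-2 : K) / τ), smul_smul, ← hφ]
    congr 1
    ring
  -- main computation
  rw [hD3]
  rw [Algebra.smul_def ((2 : K) / τ) (b' * Z ^ (u+1)), ← hφ]
  rw [← add_smul, ← add_smul]
  congr 1
  simp only [map_add, map_mul]
  rw [← ha, ← hb, ← hq', ← hy2]
  have hzs : Y ^ 2 * Z ^ (u + 3) = Z ^ (u + 1) := by
    have : Y ^ 2 * Z ^ (u + 3) = Z ^ (u + 1) * (Z * Y) ^ 2 := by ring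
    rw [this, hZY, one_pow, mul_one]
  have hzu : Z ^ u * Z ^ 3 = Z ^ (u + 3) := by rw [← pow_add]
  linear_combination (Z ^ (u + 3) * q' * b - (2:R) * b * q' * Z ^ 3 * Z ^ u) * key1 +
    (b' * Z ^ (u + 1) - (2:R) * Z * Z ^ u * b') * key2 +
    a * hzs + (φ ((-2:K)/τ) * ((u+1:ℕ):R) * (-(φ 2⁻¹)) * b * q') * hzu
end

section
/- Let $A$ be a commutative local ring with maximal ideal $\mathfrak{m}$ and residue field $k = A/\mathfrak{m}$, and let $Q \in A[x]$ be a monic polynomial of degree $d \ge 1$ whose reduction modulo $\mathfrak{m}$ is separable over $k$ (i.e., the reduction of $Q$ and its derivative generate the unit ideal of $k[x]$). Then there exist polynomials $U, V \in A[x]$ with $\deg U \le d-2$ and $\deg V \le d-1$ such that $U\,Q + V\,Q' = 1$ in $A[x]$. -/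
/-!
Since `Q` is monic, its resultant with `Q'` (Sylvester matrix of size `d + (d - 1)`) reduces
modulo `𝔪` to the corresponding resultant over `k`, which is a unit because `Q̄` and `Q̄'` are
coprime; so it is a unit of `A`. The adjugate of the Sylvester matrix writes this resultant as
`p Q + q Q'` with `deg p < d - 1` and `deg q < d`, and dividing by it gives `U` and `V`.
-/

open Polynomial

namespace Polynomial

variable {R S : Type*} [CommRing R] [CommRing S] {f g : R[X]} {n : ℕ}

/-- Padding the second size only multiplies the resultant by powers of the leading coefficient
`1` of `f`; this absorbs a drop of `g.natDegree` under reduction. -/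
theorem Monic.isUnit_resultant_iff_isCoprime_of_natDegree_le (hf : f.Monic)
    (hg : g.natDegree ≤ n) : IsUnit (resultant f g f.natDegree n) ↔ IsCoprime f g := by
  obtain ⟨k, rfl⟩ := Nat.exists_eq_add_of_le hg
  rw [resultant_add_right_deg _ _ _ _ _ le_rfl, hf.coeff_natDegree, one_pow,
    one_mul, isUnit_resultant_iff_isCoprime hf]

theorem Monic.isCoprime_of_isCoprime_map [Nontrivial S] (φ : R →+* S) [IsLocalHom φ]
    (hf : f.Monic) (h : IsCoprime (f.map φ) (g.map φ)) : IsCoprime f g := by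
  rw [← isUnit_resultant_iff_isCoprime hf, ← isUnit_map_iff φ, ← resultant_map_map,
    ← hf.natDegree_map φ]
  exact ((hf.map φ).isUnit_resultant_iff_isCoprime_of_natDegree_le natDegree_map_le).2 h

theorem Monic.exists_mul_add_mul_eq_one_of_isCoprime (hf : f.Monic) (hfg : IsCoprime f g)
    (hg : g.natDegree ≤ n) (hn : f.natDegree ≠ 0 ∨ n ≠ 0) :
    ∃ p q : R[X], p.degree < n ∧ q.degree < f.natDegree ∧ f * p + g * q = 1 := by
  obtain ⟨p, q, hp, hq, hpq⟩ := exists_mul_add_mul_eq_C_resultant f g le_rfl hg hn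
  obtain ⟨r, hr⟩ := (hf.isUnit_resultant_iff_isCoprime_of_natDegree_le hg).2 hfg
  refine ⟨(↑r⁻¹ : R) • p, (↑r⁻¹ : R) • q, (degree_smul_le _ _).trans_lt hp,
    (degree_smul_le _ _).trans_lt hq, ?_⟩
  rw [mul_smul_comm, mul_smul_comm, ← smul_add, hpq, ← hr, smul_eq_C_mul, ← C_mul,
    Units.inv_mul, C_1]

end Polynomial

/-- Let `A` be a commutative local ring with residue field `k`, and let `Q ∈ A[x]` be monic of
degree `d ≥ 1` with separable reduction modulo the maximal ideal.  Then there are polynomials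
`U, V ∈ A[x]` with `deg U ≤ d - 2` and `deg V ≤ d - 1` (the degree bounds being expressed as
`deg U + 2 ≤ d` and `deg V + 1 ≤ d`, so that the zero polynomial satisfies any bound) such
that `U Q + V Q' = 1`. -/
theorem kedlaya_bezout_for_Q
    (A : Type*) [CommRing A] [IsLocalRing A]
    (Q : Polynomial A) (d : ℕ) (hd : 1 ≤ d)
    (hmonic : Q.Monic) (hQdeg : Q.degree = (d : ℕ))
    (hsep : (Q.map (IsLocalRing.residue A)).Separable) :
    ∃ U V : Polynomial A,
      U.degree + 2 ≤ (d : WithBot ℕ) ∧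
      V.degree + 1 ≤ (d : WithBot ℕ) ∧
      U * Q + V * derivative Q = 1 := by
  have hQd : Q.natDegree = d := natDegree_eq_of_degree_eq_some hQdeg
  have hcop : IsCoprime Q (derivative Q) := by
    rw [separable_def, derivative_map] at hsep
    exact hmonic.isCoprime_of_isCoprime_map (IsLocalRing.residue A) hsep
  obtain ⟨U, V, hU, hV, hUV⟩ := hmonic.exists_mul_add_mul_eq_one_of_isCoprime hcop
    ((natDegree_derivative_le Q).trans_eq (congrArg (· - 1) hQd)) (.inl (by omega))
  refine ⟨U, V, ?_, hQd ▸ Nat.WithBot.add_one_le_of_lt hV, by linear_combination hUV⟩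
  calc U.degree + 2 = U.degree + 1 + 1 := by rw [add_assoc, one_add_one_eq_two]
    _ ≤ ↑(d - 1) + 1 := by gcongr; exact Nat.WithBot.add_one_le_of_lt hU
    _ = d := by norm_cast; omega
end

section
/- Let $K$ be a field of characteristic $0$ and let $s \in K[[t]]$ be a formal power series with constant coefficient $1$. Then there exists a unique power series $u \in K[[t]]$ with constant coefficient $1$ satisfying $u^2 s = 1$; moreover, defining the sequence $x_0 = 1$ and $x_{i+1} = \tfrac{3}{2} x_i - \tfrac{1}{2}\, s\, x_i^3$ in $K[[t]]$, one has $x_i \equiv u \pmod{t^{2^i}}$ for every $i \ge 0$ (i.e., $x_i - u$ lies in the ideal generated by $t^{2^i}$). -/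
/-- The Newton iteration `x₀ = 1`, `x_{i+1} = (3/2) xᵢ - (1/2) s xᵢ³` for computing the
inverse square root of a power series `s`. -/
noncomputable def newtonInvSqrtSeq (K : Type*) [Field K] (s : PowerSeries K) :
    ℕ → PowerSeries K
  | 0 => 1
  | i + 1 => (3 / 2 : K) • newtonInvSqrtSeq K s i - (1 / 2 : K) • (s * newtonInvSqrtSeq K s i ^ 3)

section Aux

open PowerSeries

variable {K : Type*} [Field K] [CharZero K] (s : PowerSeries K)

private lemma half_identity : (2 : PowerSeries K) * PowerSeries.C (1/2 : K) = 1 := by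
  rw [← map_ofNat (PowerSeries.C (R := K)) 2, ← map_mul]
  norm_num

private lemma newton_succ_eq (i : ℕ) :
    newtonInvSqrtSeq K s (i + 1) =
      3 * PowerSeries.C (1/2 : K) * newtonInvSqrtSeq K s i -
        PowerSeries.C (1/2 : K) * (s * newtonInvSqrtSeq K s i ^ 3) := by
  show (3 / 2 : K) • _ - (1 / 2 : K) • _ = _
  rw [smul_eq_C_mul, smul_eq_C_mul]
  congr 1
  have h32 : (3/2 : K) = 3 * (1/2 : K) := by norm_num
  rw [h32, map_mul, map_ofNat]

private lemma newton_d (hs : PowerSeries.constantCoeff s = 1) (i : ℕ) :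
    (PowerSeries.X : PowerSeries K) ^ 2 ^ i ∣ (1 - s * newtonInvSqrtSeq K s i ^ 2) := by
  induction i with
  | zero =>
    simp only [pow_zero, pow_one, newtonInvSqrtSeq, one_pow, mul_one]
    rw [X_dvd_iff, map_sub, map_one, hs, sub_self]
  | succ i ih =>
    set a := PowerSeries.C (1/2 : K) with ha
    set x := newtonInvSqrtSeq K s i with hx
    have h2 : (2 : PowerSeries K) * a = 1 := half_identity
    have key : 1 - s * newtonInvSqrtSeq K s (i + 1) ^ 2 =
        (1 - s * x ^ 2) ^ 2 * ((3 * a ^ 2) + a ^ 2 * (1 - s * x ^ 2)) := by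
      rw [newton_succ_eq, ← hx, ← ha]
      linear_combination (-(2 * a + 1)) * h2
    rw [key, pow_succ, pow_mul]
    exact Dvd.dvd.mul_right (pow_dvd_pow_of_dvd ih 2) _

private lemma newton_step (i : ℕ) :
    newtonInvSqrtSeq K s (i + 1) - newtonInvSqrtSeq K s i =
      PowerSeries.C (1/2 : K) * newtonInvSqrtSeq K s i *
        (1 - s * newtonInvSqrtSeq K s i ^ 2) := by
  set a := PowerSeries.C (1/2 : K) with ha
  set x := newtonInvSqrtSeq K s i with hx
  have h2 : (2 : PowerSeries K) * a = 1 := half_identity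
  rw [newton_succ_eq, ← hx, ← ha]
  linear_combination x * h2

private lemma newton_cauchy (hs : PowerSeries.constantCoeff s = 1) {j k : ℕ} (h : j ≤ k) :
    (PowerSeries.X : PowerSeries K) ^ 2 ^ j ∣
      (newtonInvSqrtSeq K s k - newtonInvSqrtSeq K s j) := by
  induction k with
  | zero =>
    have hj : j = 0 := Nat.le_zero.mp h
    subst hj; simp
  | succ k ih =>
    rcases Nat.lt_or_ge j (k + 1) with h' | h'
    · have hjk : j ≤ k := Nat.lt_succ_iff.mp h'
      have h1 := ih hjk
      have h2 : (PowerSeries.X : PowerSeries K) ^ 2 ^ j ∣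
          (newtonInvSqrtSeq K s (k + 1) - newtonInvSqrtSeq K s k) := by
        rw [newton_step]
        exact ((pow_dvd_pow _ (Nat.pow_le_pow_right (by norm_num) hjk)).trans
          (newton_d s hs k)).mul_left _
      have := dvd_add h2 h1
      simpa using this
    · have hj : j = k + 1 := le_antisymm h h'
      subst hj; simp

end Aux

/-- Let `K` be a field of characteristic zero and `s ∈ K[[t]]` a power series with constant
coefficient `1`.  There is a unique `u ∈ K[[t]]` with constant coefficient `1` such that
`u² s = 1`; moreover, the Newton iteration `x₀ = 1`, `x_{i+1} = (3/2) xᵢ - (1/2) s xᵢ³`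
converges quadratically to `u`: `xᵢ ≡ u (mod t^{2^i})` for every `i`. -/
theorem kedlaya_newton_inv_sqrt
    (K : Type*) [Field K] [CharZero K]
    (s : PowerSeries K) (hs : PowerSeries.constantCoeff s = 1) :
    (∃! u : PowerSeries K, PowerSeries.constantCoeff u = 1 ∧ u ^ 2 * s = 1) ∧
    (∀ u : PowerSeries K, PowerSeries.constantCoeff u = 1 → u ^ 2 * s = 1 →
      ∀ i : ℕ, newtonInvSqrtSeq K s i - u ∈
        Ideal.span {(PowerSeries.X : PowerSeries K) ^ 2 ^ i}) := by
  classical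
  -- Part 2 first: Newton convergence for any inverse square root `u`.
  have part2 : ∀ u : PowerSeries K, PowerSeries.constantCoeff u = 1 → u ^ 2 * s = 1 →
      ∀ i : ℕ, (PowerSeries.X : PowerSeries K) ^ 2 ^ i ∣ (newtonInvSqrtSeq K s i - u) := by
    intro u hu1 hu2 i
    induction i with
    | zero =>
      simp only [pow_zero, pow_one, newtonInvSqrtSeq]
      rw [PowerSeries.X_dvd_iff, map_sub, map_one, hu1, sub_self]
    | succ i ih =>
      set a := PowerSeries.C (1/2 : K) with ha
      set x := newtonInvSqrtSeq K s i with hx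
      have h2 : (2 : PowerSeries K) * a = 1 := half_identity
      have key : newtonInvSqrtSeq K s (i + 1) - u =
          -(a * (s * (x - u) ^ 2 * (3 * u + (x - u)))) := by
        rw [newton_succ_eq, ← hx, ← ha]
        linear_combination u * h2 - a * (3 * x - 2 * u) * hu2
      rw [key, dvd_neg, pow_succ, pow_mul]
      exact ((pow_dvd_pow_of_dvd ih 2).mul_left _).mul_right _ |>.mul_left _
  -- Construction of `u` as the limit of the Newton iteration.
  set u : PowerSeries K :=
    PowerSeries.mk fun n => PowerSeries.coeff n (newtonInvSqrtSeq K s (n + 1)) with hu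
  have hstab : ∀ n j : ℕ, n < 2 ^ j →
      PowerSeries.coeff n u = PowerSeries.coeff n (newtonInvSqrtSeq K s j) := by
    intro n j hnj
    rw [hu, PowerSeries.coeff_mk]
    rcases le_total j (n + 1) with h | h
    · have hd := newton_cauchy s hs h
      have := (PowerSeries.X_pow_dvd_iff.mp hd) n hnj
      rw [map_sub, sub_eq_zero] at this
      exact this
    · have hd := newton_cauchy s hs h
      have hn : n < 2 ^ (n + 1) := (Nat.lt_two_pow_self (n := n)).trans_le
        (Nat.pow_le_pow_right (by norm_num) (Nat.le_succ n))
      have := (PowerSeries.X_pow_dvd_iff.mp hd) n hn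
      rw [map_sub, sub_eq_zero] at this
      exact this.symm
  have hconv : ∀ j : ℕ, (PowerSeries.X : PowerSeries K) ^ 2 ^ j ∣
      (newtonInvSqrtSeq K s j - u) := by
    intro j
    rw [PowerSeries.X_pow_dvd_iff]
    intro m hm
    rw [map_sub, ← hstab m j hm, sub_self]
  have hu1 : PowerSeries.constantCoeff u = 1 := by
    have h0 := hstab 0 0 (by norm_num)
    simp only [newtonInvSqrtSeq] at h0
    rw [← PowerSeries.coeff_zero_eq_constantCoeff_apply, h0]
    simp
  have hu2 : u ^ 2 * s = 1 := by
    have hdvd : ∀ j : ℕ, (PowerSeries.X : PowerSeries K) ^ 2 ^ j ∣ (u ^ 2 * s - 1) := by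
      intro j
      set x := newtonInvSqrtSeq K s j with hx
      have key : u ^ 2 * s - 1 =
          -(1 - s * x ^ 2) + s * (u - x) * (u + x) := by ring
      rw [key]
      refine dvd_add (dvd_neg.mpr (newton_d s hs j)) ?_
      have h' : (PowerSeries.X : PowerSeries K) ^ 2 ^ j ∣ (u - x) :=
        (dvd_sub_comm).mp (hconv j)
      exact (h'.mul_left _).mul_right _
    have : u ^ 2 * s - 1 = 0 := by
      ext n
      have := (PowerSeries.X_pow_dvd_iff.mp (hdvd n)) n (Nat.lt_two_pow_self (n := n))
      simpa using this
    exact sub_eq_zero.mp this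
  refine ⟨⟨u, ⟨hu1, hu2⟩, ?_⟩, fun v hv1 hv2 i => Ideal.mem_span_singleton.mpr (part2 v hv1 hv2 i)⟩
  -- uniqueness
  rintro v ⟨hv1, hv2⟩
  have hsne : s ≠ 0 := fun h => by simp [h] at hs
  have hsq : v ^ 2 = u ^ 2 := by
    have : (v ^ 2 - u ^ 2) * s = 0 := by rw [sub_mul, hv2, hu2, sub_self]
    rcases mul_eq_zero.mp this with h | h
    · exact sub_eq_zero.mp h
    · exact absurd h hsne
  have hvu : (v - u) * (v + u) = 0 := by linear_combination hsq
  rcases mul_eq_zero.mp hvu with h | h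
  · exact sub_eq_zero.mp h
  · exfalso
    have : PowerSeries.constantCoeff (v + u) = 2 := by rw [map_add, hv1, hu1]; norm_num
    rw [h] at this
    simp at this
end
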